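/- Let k be a positive integer, X a topological space with S(2k)-cellularity at most κ (κ infinite), and let 𝒰 be a family of S(2k-1)-open subsets of X with fixed chains (writing U(k) for the first set of the chain of U). Then there exists a subfamily 𝒱 ⊆ 𝒰 with |𝒱| ≤ κ such that ⋃{U(k) : U ∈ 𝒰} ⊆ θ_{2k}(⋃{cl(V) : V ∈ 𝒱}). -/

import Mathlib

/-!
Take, by Zorn's lemma, a maximal family `𝓜` of nonempty S(2k-1)-open sets, each inside some `U i`,
with pairwise disjoint closures; then `|𝓜| ≤ c_{2k}(X) ≤ κ`. Choose for each member of `𝓜` an index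
`i` with the member inside `U i`. If `x ∈ W i` had an open S(2k-1)-neighbourhood `G` whose closure
missed all the chosen `cl (U i)`, then `U i ∩ G` could be added to `𝓜`, contradicting maximality.
-/

open Cardinal Set

universe u

variable {X : Type u}

/-- `x` is S(n)-separated from `A`. -/
def SSep [TopologicalSpace X] : ℕ → X → Set X → Prop
  | 0, x, A => x ∉ closure A
  | (n+1), x, A => ∃ U : ℕ → Set X, (∀ i ≤ n, IsOpen (U i)) ∧ x ∈ U 0 ∧
      (∀ i < n, closure (U i) ⊆ U (i+1)) ∧ closure (U n) ∩ A = ∅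

/-- `X` is an S(n)-space. -/
def SSpace (n : ℕ) (X : Type u) [TopologicalSpace X] : Prop :=
  ∀ x y : X, x ≠ y → SSep n x {y}

/-- `U` is an S(2k-1)-neighborhood of `x` (for `k ≥ 1`). -/
def SOddNhd [TopologicalSpace X] (k : ℕ) (x : X) (U : Set X) : Prop :=
  ∃ V : ℕ → Set X, (∀ i < k, IsOpen (V i)) ∧ x ∈ V 0 ∧
    (∀ i, i + 1 < k → closure (V i) ⊆ V (i+1)) ∧ V (k-1) ⊆ U

/-- `U` is an S(2k)-neighborhood of `x` (for `k ≥ 1`). -/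
def SEvenNhd [TopologicalSpace X] (k : ℕ) (x : X) (U : Set X) : Prop :=
  ∃ V : ℕ → Set X, (∀ i < k, IsOpen (V i)) ∧ x ∈ V 0 ∧
    (∀ i, i + 1 < k → closure (V i) ⊆ V (i+1)) ∧ closure (V (k-1)) ⊆ U

/-- `U` is an open S(2k-1)-neighborhood of `x`. -/
def SOpenNhd [TopologicalSpace X] (k : ℕ) (x : X) (U : Set X) : Prop :=
  IsOpen U ∧ SOddNhd k x U

/-- `U` is an S(2k-1)-open set. -/
def SOpen [TopologicalSpace X] (k : ℕ) (U : Set X) : Prop :=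
  IsOpen U ∧ ∃ x, SOddNhd k x U

/-- The S(2k-1)-closure `θ_{2k-1}(A)`. -/
def thetaOdd [TopologicalSpace X] (k : ℕ) (A : Set X) : Set X :=
  {x | ∀ U : Set X, SOpenNhd k x U → (U ∩ A).Nonempty}

/-- The S(2k)-closure `θ_{2k}(A)`. -/
def thetaEven [TopologicalSpace X] (k : ℕ) (A : Set X) : Set X :=
  {x | ∀ U : Set X, SOpenNhd k x U → (closure U ∩ A).Nonempty}

/-- `D` is S(2k-1)-discrete. -/
def SOddDiscrete [TopologicalSpace X] (k : ℕ) (D : Set X) : Prop :=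
  ∀ x ∈ D, ∃ U : Set X, SOpenNhd k x U ∧ U ∩ D = {x}

/-- `D` is S(2k)-discrete. -/
def SEvenDiscrete [TopologicalSpace X] (k : ℕ) (D : Set X) : Prop :=
  ∀ x ∈ D, ∃ U : Set X, SOpenNhd k x U ∧ closure U ∩ D = {x}

/-- The S(2k-1)-spread `s_{2k-1}(X)`. -/
noncomputable def spreadOdd (k : ℕ) (X : Type u) [TopologicalSpace X] : Cardinal :=
  (⨆ D : {D : Set X // SOddDiscrete k D}, #D.1) ⊔ Cardinal.aleph0

/-- The S(2k)-spread `s_{2k}(X)`. -/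
noncomputable def spreadEven (k : ℕ) (X : Type u) [TopologicalSpace X] : Cardinal :=
  (⨆ D : {D : Set X // SEvenDiscrete k D}, #D.1) ⊔ Cardinal.aleph0

/-- The S(2k-1)-cellularity `c_{2k-1}(X)`. -/
noncomputable def cellOdd (k : ℕ) (X : Type u) [TopologicalSpace X] : Cardinal :=
  (⨆ F : {F : Set (Set X) // (∀ U ∈ F, SOpen k U ∧ U.Nonempty) ∧
      (∀ U ∈ F, ∀ V ∈ F, U ≠ V → U ∩ V = ∅)}, #F.1) ⊔ Cardinal.aleph0

/-- The S(2k)-cellularity `c_{2k}(X)`. -/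
noncomputable def cellEven (k : ℕ) (X : Type u) [TopologicalSpace X] : Cardinal :=
  (⨆ F : {F : Set (Set X) // (∀ U ∈ F, SOpen k U ∧ U.Nonempty) ∧
      (∀ U ∈ F, ∀ V ∈ F, U ≠ V → closure U ∩ closure V = ∅)}, #F.1) ⊔ Cardinal.aleph0

/-- The S(2k-1)-character `χ_{2k-1}(X)`. -/
noncomputable def charOdd (k : ℕ) (X : Type u) [TopologicalSpace X] : Cardinal :=
  sInf {c | Cardinal.aleph0 ≤ c ∧ ∀ x : X, ∃ B : Set (Set X), #B ≤ c ∧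
    (∀ U ∈ B, SOpenNhd k x U) ∧
    ∀ U : Set X, SOpenNhd k x U → ∃ V ∈ B, V ⊆ U}

/-- The S(2k)-character `χ_{2k}(X)`. -/
noncomputable def charEven (k : ℕ) (X : Type u) [TopologicalSpace X] : Cardinal :=
  sInf {c | Cardinal.aleph0 ≤ c ∧ ∀ x : X, ∃ B : Set (Set X), #B ≤ c ∧
    (∀ V ∈ B, IsClosed V ∧ SOddNhd k x V) ∧
    ∀ W : Set X, SOpenNhd k x W → ∃ V ∈ B, V ⊆ closure W}

/-- The S(2k-1)-pseudocharacter `ψ_{2k-1}(X)`. -/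
noncomputable def psiOdd (k : ℕ) (X : Type u) [TopologicalSpace X] : Cardinal :=
  sInf {c | Cardinal.aleph0 ≤ c ∧ ∀ x : X, ∃ B : Set (Set X), #B ≤ c ∧
    (∀ U ∈ B, SOpenNhd k x U) ∧ ⋂₀ B = {x}}

/-- The S(2k)-pseudocharacter `ψ_{2k}(X)`. -/
noncomputable def psiEven (k : ℕ) (X : Type u) [TopologicalSpace X] : Cardinal :=
  sInf {c | Cardinal.aleph0 ≤ c ∧ ∀ x : X, ∃ B : Set (Set X), #B ≤ c ∧
    (∀ U ∈ B, SOpenNhd k x U) ∧ (⋂ U ∈ B, closure U) = {x}}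

/-- The usual pseudocharacter `ψ(X)`. -/
noncomputable def psi (X : Type u) [TopologicalSpace X] : Cardinal :=
  sInf {c | Cardinal.aleph0 ≤ c ∧ ∀ x : X, ∃ B : Set (Set X), #B ≤ c ∧
    (∀ U ∈ B, IsOpen U) ∧ ⋂₀ B = {x}}

section

variable [TopologicalSpace X]

def SEvenCellular (k : ℕ) (F : Set (Set X)) : Prop :=
  (∀ U ∈ F, SOpen k U ∧ U.Nonempty) ∧ F.Pairwise fun U V => Disjoint (closure U) (closure V)

theorem SEvenCellular.mk_le_cellEven {k : ℕ} {F : Set (Set X)} (hF : SEvenCellular k F) :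
    #F ≤ cellEven k X := by
  refine le_trans ?_ le_sup_left
  refine le_ciSup (f := fun F : {F : Set (Set X) // (∀ U ∈ F, SOpen k U ∧ U.Nonempty) ∧
      (∀ U ∈ F, ∀ V ∈ F, U ≠ V → closure U ∩ closure V = ∅)} => #F.1)
    bddAbove_of_small ⟨F, hF.1, fun U hU V hV hUV => ?_⟩
  exact disjoint_iff_inter_eq_empty.mp (hF.2 hU hV hUV)

theorem chain_zero_subset_pred {V : ℕ → Set X} {k : ℕ}
    (h : ∀ j, j + 1 < k → closure (V j) ⊆ V (j + 1)) : V 0 ⊆ V (k - 1) := by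
  suffices ∀ j, j < k → V 0 ⊆ V j by
    rcases k with _ | k
    · exact subset_rfl
    · exact this k k.lt_succ_self
  intro j hj
  induction j with
  | zero => exact subset_rfl
  | succ j ih => exact (ih (by omega)).trans (subset_closure.trans (h j hj))

theorem SOddNhd.mem {k : ℕ} {x : X} {U : Set X} (h : SOddNhd k x U) : x ∈ U := by
  obtain ⟨V, -, hx, hchain, hVU⟩ := h
  exact hVU (chain_zero_subset_pred hchain hx)

theorem SOddNhd.inter {k : ℕ} {x : X} {U U' : Set X} (h : SOddNhd k x U) (h' : SOddNhd k x U') :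
    SOddNhd k x (U ∩ U') := by
  obtain ⟨V, hV, hx, hchain, hVU⟩ := h
  obtain ⟨V', hV', hx', hchain', hVU'⟩ := h'
  refine ⟨fun j => V j ∩ V' j, fun j hj => (hV j hj).inter (hV' j hj), ⟨hx, hx'⟩,
    fun j hj => ?_, inter_subset_inter hVU hVU'⟩
  exact (closure_inter_subset_inter_closure _ _).trans
    (inter_subset_inter (hchain j hj) (hchain' j hj))

theorem SOpenNhd.inter {k : ℕ} {x : X} {U U' : Set X} (h : SOpenNhd k x U)
    (h' : SOpenNhd k x U') : SOpenNhd k x (U ∩ U') :=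
  ⟨h.1.inter h'.1, h.2.inter h'.2⟩

theorem SOpenNhd.sOpen {k : ℕ} {x : X} {U : Set X} (h : SOpenNhd k x U) : SOpen k U :=
  ⟨h.1, x, h.2⟩

theorem exists_sEvenCellular_closure_inter_nonempty (k : ℕ) (P : Set X → Prop) :
    ∃ F : Set (Set X), SEvenCellular k F ∧ (∀ s ∈ F, P s) ∧
      ∀ G, SOpen k G → G.Nonempty → P G → ∃ s ∈ F, (closure G ∩ closure s).Nonempty := by
  obtain ⟨F, ⟨hF, hFP⟩, hmax⟩ :=
    zorn_subset {F : Set (Set X) | SEvenCellular k F ∧ ∀ s ∈ F, P s} fun c hc hchain => by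
      refine ⟨⋃₀ c, ⟨⟨?_, ?_⟩, ?_⟩, fun s hs => subset_sUnion_of_mem hs⟩
      · rintro s ⟨F, hF, hsF⟩
        exact (hc hF).1.1 s hsF
      · exact (pairwise_sUnion hchain.directedOn).mpr fun F hF => (hc hF).1.2
      · rintro s ⟨F, hF, hsF⟩
        exact (hc hF).2 s hsF
  refine ⟨F, hF, hFP, fun G hG hGne hGP => ?_⟩
  by_contra! hdisj
  have hins : SEvenCellular k (insert G F) ∧ ∀ s ∈ insert G F, P s := by
    refine ⟨⟨?_, hF.2.insert fun s hs _ => ?_⟩, ?_⟩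
    · rintro s (rfl | hs)
      exacts [⟨hG, hGne⟩, hF.1 s hs]
    · have := disjoint_iff_inter_eq_empty.mpr (hdisj s hs)
      exact ⟨this, this.symm⟩
    · rintro s (rfl | hs)
      exacts [hGP, hFP s hs]
  have hGF : G ∈ F := hmax hins (subset_insert G F) (mem_insert G F)
  obtain ⟨x, hx⟩ := hGne
  exact (hdisj G hGF).subset ⟨subset_closure hx, subset_closure hx⟩

end

theorem stmt5_general (X : Type u) [TopologicalSpace X] (k : ℕ)
    (κ : Cardinal) (hc : cellEven k X ≤ κ)
    {ι : Type u} (U W : ι → Set X)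
    (hU : ∀ i : ι, IsOpen (U i) ∧ ∃ V : ℕ → Set X, (∀ j < k, IsOpen (V j)) ∧
      (∀ j, j + 1 < k → closure (V j) ⊆ V (j+1)) ∧
      V 0 = W i ∧ (W i).Nonempty ∧ V (k-1) = U i) :
    ∃ t : Set ι, #t ≤ κ ∧ (⋃ i : ι, W i) ⊆ thetaEven k (⋃ i ∈ t, closure (U i)) := by
  obtain ⟨F, hF, hFU, hmeet⟩ := exists_sEvenCellular_closure_inter_nonempty k fun s => ∃ i, s ⊆ U i
  choose f hf using fun s : F => hFU s s.2
  refine ⟨range f, mk_range_le.trans (hF.mk_le_cellEven.trans hc), ?_⟩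
  rintro x ⟨_, ⟨i, rfl⟩, hxW⟩ G hG
  obtain ⟨hUo, V, hVo, hchain, hV0, -, hVk⟩ := hU i
  have hUG : SOpenNhd k x (U i ∩ G) :=
    SOpenNhd.inter ⟨hUo, V, hVo, hV0 ▸ hxW, hchain, hVk.le⟩ hG
  obtain ⟨s, hs, y, hyG, hys⟩ := hmeet _ hUG.sOpen ⟨x, hUG.2.mem⟩ ⟨i, inter_subset_left⟩
  exact ⟨y, closure_mono inter_subset_right hyG,
    mem_biUnion (mem_range_self (⟨s, hs⟩ : F)) (closure_mono (hf ⟨s, hs⟩) hys)⟩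

theorem stmt5 (X : Type u) [TopologicalSpace X] (k : ℕ) (hk : 1 ≤ k)
    (κ : Cardinal) (hκ : Cardinal.aleph0 ≤ κ) (hc : cellEven k X ≤ κ)
    {ι : Type u} (U W : ι → Set X)
    (hU : ∀ i : ι, IsOpen (U i) ∧ ∃ V : ℕ → Set X, (∀ j < k, IsOpen (V j)) ∧
      (∀ j, j + 1 < k → closure (V j) ⊆ V (j+1)) ∧
      V 0 = W i ∧ (W i).Nonempty ∧ V (k-1) = U i) :
    ∃ t : Set ι, #t ≤ κ ∧ (⋃ i : ι, W i) ⊆ thetaEven k (⋃ i ∈ t, closure (U i)) :=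
  stmt5_general X k κ hc U W hU
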